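/- arXiv:1008.4233 — 4 statements merged into one kernel-verified Lean document; each statement's English description precedes it below -/
import Mathlib

section
/- Let f : ℝ → ℝ be γ-Hölder on [0,T] with constant C > 0 (γ ∈ (0,1], T > 0), let p > 0 satisfy pγ > 1, and let X := f + J, where J is the jump part with jump sizes c_1,…,c_r and distinct jump times τ_1,…,τ_r ∈ (0,T). Then the δ-step p-variation of X converges to the sum of p-th powers of the jump sizes: lim_{δ→0+} B(X,p,δ,T) = ∑_{m=1}^{r} |c_m|^p. -/
/-! For `δ` smaller than the gaps between the jump times and their distances to `0` and `T`,
each jump time `τ m` lies in its own grid cell `((k-1)δ, kδ]`, namely `k = ⌈τ m / δ⌉₊ ≤ ⌊T/δ⌋₊`.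
The `p`-variation then splits into the `r` jump cells, whose increments are `c m + O(δ^γ)`, and
at most `T/δ` other cells, whose increments are `O(δ^γ)`; these contribute at most
`C^p T δ^(pγ-1)`, which tends to `0` because `pγ > 1`. -/

open Finset Filter

/-- The `δ`-step `p`-variation of `X : ℝ → ℝ` up to horizon `T`:
`B(X,p,δ,T) = ∑_{k=1}^{⌊T/δ⌋} |X(kδ) − X((k−1)δ)|^p`. -/
noncomputable def stepPVar (X : ℝ → ℝ) (p δ T : ℝ) : ℝ :=
  ∑ k ∈ Finset.Icc 1 ⌊T / δ⌋₊, |X ((k : ℝ) * δ) - X (((k : ℝ) - 1) * δ)| ^ p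

open Function Topology

def stepIncrement (X : ℝ → ℝ) (δ : ℝ) (k : ℕ) : ℝ :=
  X ((k : ℝ) * δ) - X (((k : ℝ) - 1) * δ)

noncomputable def jumpPart {ι : Type*} [Fintype ι] (c τ : ι → ℝ) (t : ℝ) : ℝ :=
  ∑ m, if τ m ≤ t then c m else 0

lemma stepPVar_eq_sum_stepIncrement (X : ℝ → ℝ) (p δ T : ℝ) :
    stepPVar X p δ T = ∑ k ∈ Icc 1 ⌊T / δ⌋₊, |stepIncrement X δ k| ^ p :=
  rfl

lemma stepIncrement_add (X Y : ℝ → ℝ) (δ : ℝ) (k : ℕ) :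
    stepIncrement (fun t => X t + Y t) δ k = stepIncrement X δ k + stepIncrement Y δ k := by
  unfold stepIncrement
  ring

lemma ceil_div_eq_iff {x δ : ℝ} (hδ : 0 < δ) {k : ℕ} (hk : k ≠ 0) :
    ⌈x / δ⌉₊ = k ↔ ((k : ℝ) - 1) * δ < x ∧ x ≤ k * δ := by
  rw [Nat.ceil_eq_iff hk, Nat.cast_pred (Nat.pos_of_ne_zero hk), lt_div_iff₀ hδ, div_le_iff₀ hδ]

lemma stepIncrement_jumpPart {ι : Type*} [Fintype ι] (c τ : ι → ℝ) {δ : ℝ} (hδ : 0 < δ)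
    {k : ℕ} (hk : k ≠ 0) :
    stepIncrement (jumpPart c τ) δ k = ∑ m, if ⌈τ m / δ⌉₊ = k then c m else 0 := by
  rw [stepIncrement, jumpPart, jumpPart, ← sum_sub_distrib]
  refine sum_congr rfl fun m _ => ?_
  simp only [ceil_div_eq_iff hδ hk]
  have hcell : ((k : ℝ) - 1) * δ ≤ k * δ := by nlinarith
  split_ifs <;> grind

lemma sum_add_sum_ite_eq_of_injective {ι M N : Type*} [Fintype ι] [AddCommMonoid M]
    [AddCommMonoid N] (φ : M → N) (u : ℕ → M) (c : ι → M) {K : ι → ℕ} (hK : Injective K)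
    {s : Finset ℕ} (hKs : ∀ m, K m ∈ s) :
    ∑ k ∈ s, φ (u k + ∑ m, if K m = k then c m else 0) =
      ∑ m, φ (u (K m) + c m) + ∑ k ∈ s \ univ.image K, φ (u k) := by
  classical
  have himage : univ.image K ⊆ s := fun k hk => by
    obtain ⟨m, -, rfl⟩ := mem_image.mp hk
    exact hKs m
  rw [← sum_sdiff himage, sum_image fun m _ m' _ h => hK h, add_comm]
  congr 1
  · refine sum_congr rfl fun m _ => ?_
    simp only [hK.eq_iff, sum_ite_eq', mem_univ, if_true]
  · refine sum_congr rfl fun k hk => ?_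
    have hnot : ∀ m, K m ≠ k := fun m h => (Finset.mem_sdiff.mp hk).2 (h ▸ mem_image_of_mem K
      (mem_univ m))
    simp only [hnot, if_false, sum_const_zero, add_zero]

lemma abs_stepIncrement_le_of_holder {f : ℝ → ℝ} {γ C T δ : ℝ}
    (hf : ∀ s ∈ Set.Icc (0 : ℝ) T, ∀ t ∈ Set.Icc (0 : ℝ) T, |f s - f t| ≤ C * |s - t| ^ γ)
    (hδ : 0 < δ) {k : ℕ} (hk : k ∈ Icc 1 ⌊T / δ⌋₊) :
    |stepIncrement f δ k| ≤ C * δ ^ γ := by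
  obtain ⟨hk1, hkN⟩ := mem_Icc.mp hk
  have hk1' : (1 : ℝ) ≤ k := by exact_mod_cast hk1
  have hkT : (k : ℝ) * δ ≤ T := by
    rw [← le_div_iff₀ hδ]
    exact (Nat.le_floor_iff' (Nat.one_le_iff_ne_zero.mp hk1)).mp hkN
  have hmem : ∀ t : ℝ, 0 ≤ t → t ≤ k * δ → t ∈ Set.Icc 0 T := fun t h0 h1 => ⟨h0, h1.trans hkT⟩
  have h := hf _ (hmem _ (by positivity) le_rfl) (((k : ℝ) - 1) * δ)
    (hmem _ (by nlinarith) (by nlinarith))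
  rwa [show (k : ℝ) * δ - ((k : ℝ) - 1) * δ = δ by ring, abs_of_pos hδ] at h

lemma injective_ceil_div_of_pairwise_lt {ι : Type*} {τ : ι → ℝ} {δ : ℝ} (hδ : 0 < δ)
    (hpos : ∀ m, 0 < τ m) (hgap : Pairwise fun m m' => δ < |τ m - τ m'|) :
    Injective fun m => ⌈τ m / δ⌉₊ := by
  intro m m' hcell
  by_contra hne
  have hk : ⌈τ m / δ⌉₊ ≠ 0 := Nat.one_le_iff_ne_zero.mp (Nat.one_le_ceil_iff.mpr (div_pos (hpos m) hδ))
  obtain ⟨hm₁, hm₂⟩ := (ceil_div_eq_iff hδ hk).mp rfl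
  obtain ⟨hm'₁, hm'₂⟩ := (ceil_div_eq_iff hδ hk).mp hcell.symm
  have hclose : |τ m - τ m'| < δ := abs_sub_lt_iff.mpr ⟨by linarith, by linarith⟩
  exact (hgap hne).not_gt hclose

lemma ceil_div_mem_Icc_one_floor_div {τ δ T : ℝ} (hδ : 0 < δ) (hτ : 0 < τ) (hτT : τ + δ ≤ T) :
    ⌈τ / δ⌉₊ ∈ Icc 1 ⌊T / δ⌋₊ := by
  refine mem_Icc.mpr ⟨Nat.one_le_ceil_iff.mpr (div_pos hτ hδ), Nat.le_floor ?_⟩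
  calc (⌈τ / δ⌉₊ : ℝ) ≤ τ / δ + 1 := (Nat.ceil_lt_add_one (div_pos hτ hδ).le).le
    _ = (τ + δ) / δ := by field_simp
    _ ≤ T / δ := div_le_div_of_nonneg_right hτT hδ.le

lemma eventually_injective_ceil_div_and_mem_Icc {ι : Type*} [Finite ι] {τ : ι → ℝ} {T : ℝ}
    (hinj : Injective τ) (hmem : ∀ m, τ m ∈ Set.Ioo 0 T) :
    ∀ᶠ δ in 𝓝[>] 0, Injective (fun m => ⌈τ m / δ⌉₊) ∧ ∀ m, ⌈τ m / δ⌉₊ ∈ Icc 1 ⌊T / δ⌋₊ := by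
  have hgap : ∀ᶠ δ in 𝓝 (0 : ℝ), Pairwise fun m m' => δ < |τ m - τ m'| := by
    simp only [Pairwise, eventually_all]
    exact fun m m' hne => eventually_lt_nhds (abs_pos.mpr (sub_ne_zero.mpr (hinj.ne hne)))
  have hroom : ∀ᶠ δ in 𝓝 (0 : ℝ), ∀ m, τ m + δ ≤ T := eventually_all.mpr fun m =>
    (eventually_lt_nhds (sub_pos.mpr (hmem m).2)).mono fun δ h => by linarith
  filter_upwards [self_mem_nhdsWithin, nhdsWithin_le_nhds (hgap.and hroom)]
    with δ hδ ⟨hgap, hroom⟩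
  exact ⟨injective_ceil_div_of_pairwise_lt hδ (fun m => (hmem m).1) hgap,
    fun m => ceil_div_mem_Icc_one_floor_div hδ (hmem m).1 (hroom m)⟩

lemma sum_abs_stepIncrement_rpow_le_of_holder {f : ℝ → ℝ} {γ C T p δ : ℝ}
    (hf : ∀ s ∈ Set.Icc (0 : ℝ) T, ∀ t ∈ Set.Icc (0 : ℝ) T, |f s - f t| ≤ C * |s - t| ^ γ)
    (hC : 0 ≤ C) (hT : 0 ≤ T) (hp : 0 ≤ p) (hδ : 0 < δ) {s : Finset ℕ}
    (hs : s ⊆ Icc 1 ⌊T / δ⌋₊) :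
    ∑ k ∈ s, |stepIncrement f δ k| ^ p ≤ C ^ p * T * δ ^ (p * γ - 1) := by
  have hcard : (s.card : ℝ) ≤ T / δ := by
    have h := card_le_card hs
    rw [Nat.card_Icc, Nat.add_sub_cancel] at h
    exact (Nat.cast_le.mpr h).trans (Nat.floor_le (div_nonneg hT hδ.le))
  calc ∑ k ∈ s, |stepIncrement f δ k| ^ p
      ≤ ∑ _k ∈ s, (C * δ ^ γ) ^ p := sum_le_sum fun k hk =>
        Real.rpow_le_rpow (abs_nonneg _) (abs_stepIncrement_le_of_holder hf hδ (hs hk)) hp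
    _ = s.card * (C * δ ^ γ) ^ p := by rw [sum_const, nsmul_eq_mul]
    _ ≤ T / δ * (C * δ ^ γ) ^ p := mul_le_mul_of_nonneg_right hcard (by positivity)
    _ = C ^ p * T * δ ^ (p * γ - 1) := by
      rw [Real.mul_rpow hC (by positivity), ← Real.rpow_mul hδ.le, Real.rpow_sub hδ,
        Real.rpow_one, mul_comm γ p]
      field_simp

lemma stepPVar_add_jumpPart {ι : Type*} [Fintype ι] (f : ℝ → ℝ) (c τ : ι → ℝ) (p T : ℝ)
    {δ : ℝ} (hδ : 0 < δ) (hinj : Injective fun m => ⌈τ m / δ⌉₊)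
    (hmem : ∀ m, ⌈τ m / δ⌉₊ ∈ Icc 1 ⌊T / δ⌋₊) :
    stepPVar (fun t => f t + jumpPart c τ t) p δ T =
      ∑ m, |stepIncrement f δ ⌈τ m / δ⌉₊ + c m| ^ p +
        ∑ k ∈ Icc 1 ⌊T / δ⌋₊ \ univ.image (fun m => ⌈τ m / δ⌉₊), |stepIncrement f δ k| ^ p := by
  rw [stepPVar_eq_sum_stepIncrement,
    ← sum_add_sum_ite_eq_of_injective (fun x => |x| ^ p) _ c hinj hmem]
  refine sum_congr rfl fun k hk => ?_
  rw [stepIncrement_add, stepIncrement_jumpPart c τ hδ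
    (Nat.one_le_iff_ne_zero.mp (mem_Icc.mp hk).1)]

lemma tendsto_rpow_nhdsGT_zero {q : ℝ} (hq : 0 < q) :
    Tendsto (fun δ : ℝ => δ ^ q) (𝓝[>] 0) (𝓝 0) :=
  (tendsto_nhdsWithin_of_tendsto_nhds tendsto_id).rpow_const_nhds_zero hq

theorem pvariation_of_holder_plus_jumps_general
    (f : ℝ → ℝ) (γ C T p : ℝ) (hγ0 : 0 < γ) (hC : 0 < C)
    (hT : 0 < T) (hp : 0 < p) (hpγ : 1 < p * γ)
    (hf : ∀ s ∈ Set.Icc (0 : ℝ) T, ∀ t ∈ Set.Icc (0 : ℝ) T,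
      |f s - f t| ≤ C * |s - t| ^ γ)
    (r : ℕ) (c τ : Fin r → ℝ) (hτinj : Function.Injective τ)
    (hτmem : ∀ m, τ m ∈ Set.Ioo (0 : ℝ) T)
    (X : ℝ → ℝ) (hX : X = fun t => f t + ∑ m, if τ m ≤ t then c m else 0) :
    Tendsto (fun δ : ℝ => stepPVar X p δ T) (nhdsWithin 0 (Set.Ioi 0))
      (nhds (∑ m, |c m| ^ p)) := by
  obtain rfl : X = fun t => f t + jumpPart c τ t := hX
  have hcells := eventually_injective_ceil_div_and_mem_Icc hτinj hτmem
  have hincr (m : Fin r) :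
      Tendsto (fun δ => stepIncrement f δ ⌈τ m / δ⌉₊) (𝓝[>] 0) (𝓝 0) := by
    refine squeeze_zero_norm' ?_ (by simpa using (tendsto_rpow_nhdsGT_zero hγ0).const_mul C)
    filter_upwards [self_mem_nhdsWithin, hcells] with δ hδ hcell
    exact abs_stepIncrement_le_of_holder hf hδ (hcell.2 m)
  have hjumps : Tendsto (fun δ => ∑ m, |stepIncrement f δ ⌈τ m / δ⌉₊ + c m| ^ p) (𝓝[>] 0)
      (𝓝 (∑ m, |c m| ^ p)) := tendsto_finsetSum _ fun m _ => by
    simpa using ((hincr m).add_const (c m)).abs.rpow_const (Or.inr hp.le)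
  have hrest : Tendsto (fun δ : ℝ => C ^ p * T * δ ^ (p * γ - 1)) (𝓝[>] 0) (𝓝 0) := by
    simpa using (tendsto_rpow_nhdsGT_zero (sub_pos.mpr hpγ)).const_mul (C ^ p * T)
  refine tendsto_of_tendsto_of_tendsto_of_le_of_le' hjumps (by simpa using hjumps.add hrest)
    ?_ ?_ <;> filter_upwards [self_mem_nhdsWithin, hcells] with δ hδ ⟨hinj, hmem⟩ <;>
    rw [stepPVar_add_jumpPart f c τ p T hδ hinj hmem]
  · exact le_add_of_nonneg_right (sum_nonneg fun _ _ => by positivity)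
  · exact add_le_add_right (sum_abs_stepIncrement_rpow_le_of_holder hf hC.le hT.le hp.le hδ
      sdiff_subset) _

/-- If `f` is `γ`-Hölder on `[0,T]` with constant `C > 0`, `pγ > 1`, and
`X = f + J` where `J = ∑_m c_m · 1_{[τ_m,∞)}` is a jump part with distinct jump
times `τ_m ∈ (0,T)`, then `B(X,p,δ,T) → ∑_m |c_m|^p` as `δ → 0+`. -/
theorem pvariation_of_holder_plus_jumps
    (f : ℝ → ℝ) (γ C T p : ℝ) (hγ0 : 0 < γ) (hγ1 : γ ≤ 1) (hC : 0 < C)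
    (hT : 0 < T) (hp : 0 < p) (hpγ : 1 < p * γ)
    (hf : ∀ s ∈ Set.Icc (0 : ℝ) T, ∀ t ∈ Set.Icc (0 : ℝ) T,
      |f s - f t| ≤ C * |s - t| ^ γ)
    (r : ℕ) (c τ : Fin r → ℝ) (hτinj : Function.Injective τ)
    (hτmem : ∀ m, τ m ∈ Set.Ioo (0 : ℝ) T)
    (X : ℝ → ℝ) (hX : X = fun t => f t + ∑ m, if τ m ≤ t then c m else 0) :
    Tendsto (fun δ : ℝ => stepPVar X p δ T) (nhdsWithin 0 (Set.Ioi 0))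
      (nhds (∑ m, |c m| ^ p)) :=
  pvariation_of_holder_plus_jumps_general f γ C T p hγ0 hC hT hp hpγ hf r c τ hτinj hτmem X hX
end

section
/- Let f : ℝ → ℝ be continuous on [0,T] (T > 0) and suppose that its quadratic variation along the uniform partitions exists, i.e. lim_{n→∞} ∑_{k=1}^{n} (f(kT/n) − f((k−1)T/n))² = A for some A ∈ ℝ. Let J be the jump part with jump sizes c_1,…,c_r and distinct jump times τ_1,…,τ_r ∈ (0,T). Then lim_{n→∞} ∑_{k=1}^{n} ((f+J)(kT/n) − (f+J)((k−1)T/n))² = A + ∑_{m=1}^{r} c_m². -/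
/-!
On the partition of mesh `T / n`, the increment of `J` over the cell `((k - 1) T / n, k T / n]` is
the sum of the `c m` with `τ m` in that cell. Once the mesh is smaller than the gaps between the
jump times each cell holds at most one jump, so expanding the squares leaves the quadratic variation
of `f`, the sum of the `c m ^ 2`, and the cross terms `2 c m (f (k T / n) - f ((k - 1) T / n))` at
the cells containing the `τ m`, which vanish by continuity of `f` at `τ m`.
-/

open Finset Filter Function Topology

theorem eventually_injective_of_tendsto {ι α X : Type*} [Finite ι] [TopologicalSpace X]
    [T2Space X] {l : Filter α} {a : ι → α → X} {x : ι → X} (hx : Injective x)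
    (ha : ∀ i, Tendsto (a i) l (𝓝 (x i))) : ∀ᶠ t in l, Injective fun i => a i t := by
  have hne : ∀ i j, ∀ᶠ t in l, i ≠ j → a i t ≠ a j t := fun i j => by
    by_cases hij : i = j
    · exact .of_forall fun _ h => absurd hij h
    · have hsep : (x i, x j) ∈ (Set.diagonal X)ᶜ := hx.ne hij
      filter_upwards [((ha i).prodMk_nhds (ha j)).eventually
        (isClosed_diagonal.isOpen_compl.mem_nhds hsep)] with t ht _ using ht
  filter_upwards [eventually_all.2 fun i => eventually_all.2 (hne i)] with t ht i j hij
  by_contra h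
  exact ht i j h hij

noncomputable def jumpIndex (T τ : ℝ) (n : ℕ) : ℕ := ⌈τ / T * n⌉₊

section jumpIndex

variable {T τ : ℝ} {n k : ℕ}

lemma jumpIndex_eq_iff (hT : 0 < T) (hn : 0 < n) (hk : k ≠ 0) :
    jumpIndex T τ n = k ↔ ((k : ℝ) - 1) * T / n < τ ∧ τ ≤ k * T / n := by
  have hn' : (0 : ℝ) < n := Nat.cast_pos.2 hn
  rw [jumpIndex, Nat.ceil_eq_iff hk, Nat.cast_pred (Nat.pos_of_ne_zero hk), div_mul_eq_mul_div,
    lt_div_iff₀ hT, div_le_iff₀ hT, div_lt_iff₀ hn', le_div_iff₀ hn']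

lemma jumpIndex_mem_Icc (hT : 0 < T) (hτ : τ ∈ Set.Ioo 0 T) (hn : 0 < n) :
    jumpIndex T τ n ∈ Icc 1 n := by
  have hn' : (0 : ℝ) < n := Nat.cast_pos.2 hn
  refine mem_Icc.2 ⟨Nat.one_le_iff_ne_zero.2 (Nat.ceil_pos.2 ?_).ne', Nat.ceil_le.2 ?_⟩
  · exact mul_pos (div_pos hτ.1 hT) hn'
  · exact mul_le_of_le_one_left hn'.le ((div_le_one hT).2 hτ.2.le)

lemma step_sub_step_eq_ite_jumpIndex (c : ℝ) (hT : 0 < T) (hn : 0 < n) (hk : k ≠ 0) :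
    ((if τ ≤ k * T / n then c else 0) - if τ ≤ ((k : ℝ) - 1) * T / n then c else 0) =
      if jumpIndex T τ n = k then c else 0 := by
  have hmono : ((k : ℝ) - 1) * T / n ≤ k * T / n := by gcongr; linarith
  simp only [jumpIndex_eq_iff hT hn hk]
  by_cases h₁ : τ ≤ ((k : ℝ) - 1) * T / n
  · simp [h₁, h₁.trans hmono, not_lt.2 h₁]
  · by_cases h₂ : τ ≤ k * T / n <;> simp [h₁, h₂, not_le.1 h₁]

lemma tendsto_jumpIndex_mul_div (hT : 0 < T) (hτ : 0 ≤ τ) :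
    Tendsto (fun n : ℕ => (jumpIndex T τ n : ℝ) * T / n) atTop (𝓝 τ) := by
  have h := ((tendsto_nat_ceil_mul_div_atTop (div_nonneg hτ hT.le)).comp
    tendsto_natCast_atTop_atTop).mul_const T
  rw [div_mul_cancel₀ τ hT.ne'] at h
  refine h.congr fun n => ?_
  simp only [comp_apply, jumpIndex]
  ring

lemma tendsto_jumpIndex_sub_one_mul_div (hT : 0 < T) (hτ : 0 ≤ τ) :
    Tendsto (fun n : ℕ => ((jumpIndex T τ n : ℝ) - 1) * T / n) atTop (𝓝 τ) := by
  have h := (tendsto_jumpIndex_mul_div hT hτ).sub (tendsto_const_div_atTop_nhds_zero_nat T)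
  rw [sub_zero] at h
  exact h.congr fun n => by ring

lemma tendsto_sub_at_jumpIndex {f : ℝ → ℝ} (hT : 0 < T) (hτ : 0 ≤ τ) (hf : ContinuousAt f τ) :
    Tendsto (fun n : ℕ => f (jumpIndex T τ n * T / n) - f ((jumpIndex T τ n - 1) * T / n))
      atTop (𝓝 0) := by
  simpa using (hf.tendsto.comp (tendsto_jumpIndex_mul_div hT hτ)).sub
    (hf.tendsto.comp (tendsto_jumpIndex_sub_one_mul_div hT hτ))

end jumpIndex

section IndicatorSum

variable {ι μ : Type*} [Fintype μ] [DecidableEq ι] {s : Finset ι} {K : μ → ι} (c : μ → ℝ)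

lemma sum_sum_ite_eq_mul (hK : ∀ m, K m ∈ s) (y : ι → ℝ) :
    ∑ k ∈ s, (∑ m, if K m = k then c m else 0) * y k = ∑ m, c m * y (K m) := by
  simp_rw [sum_mul, ite_mul, zero_mul]
  rw [sum_comm]
  exact sum_congr rfl fun m _ => by rw [sum_ite_eq, if_pos (hK m)]

lemma sum_ite_apply_eq_of_injective (hK : Injective K) (m : μ) :
    (∑ m', if K m' = K m then c m' else 0) = c m := by
  rw [sum_eq_single m (fun m' _ h => if_neg (hK.ne h)) (absurd (mem_univ m)), if_pos rfl]

lemma sum_add_sum_ite_sq (hKs : ∀ m, K m ∈ s) (hK : Injective K) (x : ι → ℝ) :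
    ∑ k ∈ s, (x k + ∑ m, if K m = k then c m else 0) ^ 2 =
      ∑ k ∈ s, x k ^ 2 + (∑ m, 2 * c m * x (K m) + ∑ m, c m ^ 2) := by
  set D := fun k => ∑ m, if K m = k then c m else 0
  have hcross : ∑ k ∈ s, 2 * x k * D k = ∑ m, 2 * c m * x (K m) := by
    simp only [mul_assoc, ← mul_sum, mul_comm (x _), sum_sum_ite_eq_mul c hKs x, D]
  have hsq : ∑ k ∈ s, D k ^ 2 = ∑ m, c m ^ 2 := by
    simp only [sq, sum_sum_ite_eq_mul c hKs D, D, sum_ite_apply_eq_of_injective c hK]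
  rw [← hcross, ← hsq, ← sum_add_distrib, ← sum_add_distrib]
  exact sum_congr rfl fun k _ => add_sq _ _ |>.trans (add_assoc _ _ _)

end IndicatorSum

/-- If `f` is continuous on `[0,T]` and its quadratic variation along the uniform
partitions exists with limit `A`, and `J = ∑_m c_m · 1_{[τ_m,∞)}` is a jump part with
distinct jump times `τ_m ∈ (0,T)`, then the quadratic variation of `f + J` along the
uniform partitions converges to `A + ∑_m c_m²`. -/
theorem quadratic_variation_of_continuous_plus_jumps
    (f : ℝ → ℝ) (T A : ℝ) (hT : 0 < T)
    (hf : ContinuousOn f (Set.Icc 0 T))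
    (hQV : Tendsto (fun n : ℕ => ∑ k ∈ Finset.Icc 1 n,
        (f ((k : ℝ) * T / n) - f (((k : ℝ) - 1) * T / n)) ^ 2) atTop (nhds A))
    (r : ℕ) (c τ : Fin r → ℝ) (hτinj : Function.Injective τ)
    (hτmem : ∀ m, τ m ∈ Set.Ioo (0 : ℝ) T)
    (J : ℝ → ℝ) (hJ : J = fun t => ∑ m, if τ m ≤ t then c m else 0) :
    Tendsto (fun n : ℕ => ∑ k ∈ Finset.Icc 1 n,
        ((f ((k : ℝ) * T / n) + J ((k : ℝ) * T / n)) -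
          (f (((k : ℝ) - 1) * T / n) + J (((k : ℝ) - 1) * T / n))) ^ 2)
      atTop (nhds (A + ∑ m, (c m) ^ 2)) := by
  subst hJ
  beta_reduce
  have hcross : Tendsto (fun n : ℕ => ∑ m, 2 * c m *
      (f (jumpIndex T (τ m) n * T / n) - f ((jumpIndex T (τ m) n - 1) * T / n))) atTop (𝓝 0) := by
    simpa using tendsto_finsetSum univ fun m _ => (tendsto_sub_at_jumpIndex hT (hτmem m).1.le
      (hf.continuousAt (Icc_mem_nhds (hτmem m).1 (hτmem m).2))).const_mul (2 * c m)
  have hinj : ∀ᶠ n in atTop, Injective fun m => jumpIndex T (τ m) n :=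
    (eventually_injective_of_tendsto hτinj fun m =>
      tendsto_jumpIndex_mul_div hT (hτmem m).1.le).mono fun n h =>
        Injective.of_comp (f := fun k : ℕ => (k : ℝ) * T / n) h
  have hlim := hQV.add (hcross.add (tendsto_const_nhds (x := ∑ m, c m ^ 2)))
  rw [zero_add] at hlim
  refine hlim.congr' ?_
  filter_upwards [hinj, eventually_gt_atTop 0] with n hinj hn
  have hinc : ∀ k ∈ Icc 1 n,
      (f (k * T / n) + ∑ m, if τ m ≤ k * T / n then c m else 0) -
        (f ((k - 1) * T / n) + ∑ m, if τ m ≤ (k - 1) * T / n then c m else 0) =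
      (f (k * T / n) - f ((k - 1) * T / n)) + ∑ m, if jumpIndex T (τ m) n = k then c m else 0 :=
    fun k hk => by
      rw [add_sub_add_comm, ← sum_sub_distrib]
      exact congrArg _ (sum_congr rfl fun m _ => step_sub_step_eq_ite_jumpIndex (c m) hT hn
        (Nat.one_le_iff_ne_zero.1 (mem_Icc.1 hk).1))
  rw [sum_congr rfl fun k hk => congrArg (· ^ 2) (hinc k hk),
    sum_add_sum_ite_sq c (fun m => jumpIndex_mem_Icc hT (hτmem m) hn) hinj]
end

section
/- Let (ξ_i)_{i≥1} be an i.i.d. sequence of centered real Gaussian random variables with variance v > 0, S_0 := 0, S_k := ξ_1 + … + ξ_k, let M ≥ 1 be an integer and p > 0. Then almost surely the ratio of the 2M-step p-variation to the M-step p-variation converges to 2^{p/2 − 1}: lim_{n→∞} ( ∑_{k=1}^{⌊n/(2M)⌋} |S_{2kM} − S_{(2k−2)M}|^p ) / ( ∑_{k=1}^{⌊n/M⌋} |S_{kM} − S_{(k−1)M}|^p ) = 2^{p/2 − 1}. -/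
/-!
The `M`-step increments of the walk over disjoint blocks are i.i.d. `N(0, Mv)`, and the
`2M`-step increments i.i.d. `N(0, 2Mv)`. By the strong law of large numbers the averages of their
`p`-th absolute powers converge a.s. to `E|N(0, Mv)|^p` and to `2^{p/2} E|N(0, Mv)|^p`
(Gaussian scaling). The numerator has half as many terms as the denominator, so the ratio tends
to `2^{p/2} / 2`.
-/

open Finset Filter MeasureTheory ProbabilityTheory

open scoped NNReal Topology

lemma map_finsetSum_eq_gaussianReal_of_iIndepFun {Ω ι : Type*} [MeasurableSpace Ω] {P : Measure Ω}
    {X : ι → Ω → ℝ} (hmeas : ∀ i, AEMeasurable (X i) P) (hindep : iIndepFun X P)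
    {m : ι → ℝ} {v : ι → ℝ≥0} (hlaw : ∀ i, P.map (X i) = gaussianReal (m i) (v i))
    (s : Finset ι) :
    P.map (fun ω ↦ ∑ i ∈ s, X i ω) = gaussianReal (∑ i ∈ s, m i) (∑ i ∈ s, v i) := by
  have := hindep.isProbabilityMeasure
  have : IsProbabilityMeasure (P.map (fun ω ↦ ∑ i ∈ s, X i ω)) :=
    Measure.isProbabilityMeasure_map (aemeasurable_fun_sum s fun i _ ↦ hmeas i)
  refine Measure.ext_of_charFun (funext fun t ↦ ?_)
  rw [(hindep.restrict s).charFun_map_fun_finsetSum_eq_prod (fun i _ ↦ hmeas i), prod_apply]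
  simp only [hlaw, charFun_gaussianReal, ← Complex.exp_sum]
  push_cast
  congr 1
  rw [mul_sum, sum_mul, sum_mul, sum_div, ← sum_sub_distrib]

lemma integral_abs_rpow_gaussianReal_mul (V t : ℝ≥0) (p : ℝ) :
    ∫ x, |x| ^ p ∂gaussianReal 0 (t * V) = t ^ (p / 2) * ∫ x, |x| ^ p ∂gaussianReal 0 V := by
  have hmap : (gaussianReal 0 V).map (√(t : ℝ) * ·) = gaussianReal 0 (t * V) := by
    rw [gaussianReal_map_const_mul, mul_zero]
    congr
    exact Real.sq_sqrt t.coe_nonneg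
  rw [← hmap, integral_map (by fun_prop)
    ((measurable_abs.pow_const p).aestronglyMeasurable), ← integral_const_mul]
  congr 1 with x
  rw [abs_mul, Real.mul_rpow (abs_nonneg _) (abs_nonneg _), abs_of_nonneg (Real.sqrt_nonneg _),
    Real.sqrt_eq_rpow, ← Real.rpow_mul t.coe_nonneg, one_div_mul_eq_div]

lemma integrable_abs_rpow_gaussianReal (μ : ℝ) (V : ℝ≥0) {p : ℝ} (hp : 0 ≤ p) :
    Integrable (fun x ↦ |x| ^ p) (gaussianReal μ V) := by
  simpa [hp] using (memLp_id_gaussianReal (μ := μ) (v := V) p.toNNReal).integrable_norm_rpow'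

lemma integral_abs_rpow_gaussianReal_pos (μ : ℝ) {V : ℝ≥0} (hV : V ≠ 0) {p : ℝ} (hp : 0 ≤ p) :
    0 < ∫ x, |x| ^ p ∂gaussianReal μ V := by
  rw [integral_pos_iff_support_of_nonneg (fun x ↦ by positivity)
    (integrable_abs_rpow_gaussianReal μ V hp)]
  have hsupp : {0}ᶜ ⊆ Function.support (fun x : ℝ ↦ |x| ^ p) := fun x hx ↦
    (Real.rpow_pos_of_pos (abs_pos.2 hx) p).ne'
  refine lt_of_lt_of_le ?_ (measure_mono hsupp)
  rw [prob_compl_eq_one_sub (measurableSet_singleton 0),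
    gaussianReal_absolutelyContinuous μ hV Real.volume_singleton]
  simp

section Blocks

variable {Ω : Type*}

def blockSum (ξ : ℕ → Ω → ℝ) (L j : ℕ) (ω : Ω) : ℝ :=
  ∑ i ∈ Ico (j * L) (j * L + L), ξ i ω

lemma sum_range_sub_sum_range_eq_blockSum (ξ : ℕ → Ω → ℝ) (L j : ℕ) (ω : Ω) :
    (∑ i ∈ range ((j + 1) * L), ξ i ω) - ∑ i ∈ range (j * L), ξ i ω = blockSum ξ L j ω := by
  rw [blockSum, ← add_one_mul,
    sum_Ico_eq_sub _ (Nat.mul_le_mul_right L (Nat.le_add_right j 1))]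

lemma sum_Icc_comp_increment_eq_sum_range_blockSum (ξ : ℕ → Ω → ℝ) (L m : ℕ) (g : ℝ → ℝ)
    (ω : Ω) :
    ∑ k ∈ Icc 1 m, g ((∑ i ∈ range (k * L), ξ i ω) - ∑ i ∈ range ((k - 1) * L), ξ i ω) =
      ∑ j ∈ range m, g (blockSum ξ L j ω) := by
  rw [← Ico_add_one_right_eq_Icc, sum_Ico_eq_sum_range]
  refine sum_congr (by simp) fun j _ ↦ ?_
  rw [add_comm 1 j, Nat.add_sub_cancel, sum_range_sub_sum_range_eq_blockSum]

variable [MeasurableSpace Ω] {P : Measure Ω} {ξ : ℕ → Ω → ℝ}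

lemma measurable_blockSum (hmeas : ∀ i, Measurable (ξ i)) (L j : ℕ) :
    Measurable (blockSum ξ L j) :=
  measurable_fun_sum _ fun i _ ↦ hmeas i

lemma map_blockSum (hmeas : ∀ i, Measurable (ξ i)) (hindep : iIndepFun ξ P) {v : ℝ≥0}
    (hlaw : ∀ i, P.map (ξ i) = gaussianReal 0 v) (L j : ℕ) :
    P.map (blockSum ξ L j) = gaussianReal 0 (L * v) := by
  have hsum := map_finsetSum_eq_gaussianReal_of_iIndepFun (fun i ↦ (hmeas i).aemeasurable)
    hindep hlaw (Ico (j * L) (j * L + L))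
  refine hsum.trans ?_
  simp

lemma disjoint_Ico_blocks {L j k : ℕ} (hjk : j ≠ k) :
    Disjoint (Ico (j * L) (j * L + L)) (Ico (k * L) (k * L + L)) := by
  refine disjoint_left.2 fun i hij hik ↦ hjk ?_
  rw [mem_Ico, ← add_one_mul] at hij hik
  rw [← Nat.div_eq_of_lt_le hij.1 hij.2, Nat.div_eq_of_lt_le hik.1 hik.2]

lemma indepFun_blockSum (hmeas : ∀ i, Measurable (ξ i)) (hindep : iIndepFun ξ P) (L : ℕ)
    {j k : ℕ} (hjk : j ≠ k) : IndepFun (blockSum ξ L j) (blockSum ξ L k) P := by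
  have hsum (s : Finset ℕ) : Measurable fun x : s → ℝ ↦ ∑ i, x i :=
    measurable_fun_sum _ fun i _ ↦ measurable_pi_apply i
  convert (hindep.indepFun_finset _ _ (disjoint_Ico_blocks hjk) hmeas).comp (hsum _) (hsum _)
    using 1 <;>
  exact funext fun ω ↦ (sum_coe_sort _ fun i ↦ ξ i ω).symm

lemma strong_law_blockSum (hmeas : ∀ i, Measurable (ξ i)) (hindep : iIndepFun ξ P)
    {v : ℝ≥0} (hlaw : ∀ i, P.map (ξ i) = gaussianReal 0 v) (L : ℕ) {g : ℝ → ℝ}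
    (hg : Measurable g) (hint : Integrable g (gaussianReal 0 (L * v))) :
    ∀ᵐ ω ∂P, Tendsto (fun n : ℕ ↦ (∑ j ∈ range n, g (blockSum ξ L j ω)) / n) atTop
      (𝓝 (∫ x, g x ∂gaussianReal 0 (L * v))) := by
  have hblock j := measurable_blockSum hmeas L j
  have hlaw_g j : P.map (g ∘ blockSum ξ L j) = (gaussianReal 0 (L * v)).map g := by
    rw [← Measure.map_map hg (hblock j), map_blockSum hmeas hindep hlaw]
  have hmean : P[g ∘ blockSum ξ L 0] = ∫ x, g x ∂gaussianReal 0 (L * v) := by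
    rw [← map_blockSum hmeas hindep hlaw L 0, integral_map (hblock 0).aemeasurable
      hg.aestronglyMeasurable]
    rfl
  rw [← hmean]
  refine strong_law_ae_real (fun j ↦ g ∘ blockSum ξ L j) ?_
    (fun j k hjk ↦ (indepFun_blockSum hmeas hindep L hjk).comp hg hg)
    (fun j ↦ ⟨(hg.comp (hblock j)).aemeasurable, (hg.comp (hblock 0)).aemeasurable, ?_⟩)
  · rw [← integrable_map_measure hg.aestronglyMeasurable (hblock 0).aemeasurable,
      map_blockSum hmeas hindep hlaw]
    exact hint
  · rw [hlaw_g, hlaw_g]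

end Blocks

lemma tendsto_natCast_div_div_self {d : ℕ} (hd : d ≠ 0) :
    Tendsto (fun m : ℕ ↦ ((m / d : ℕ) : ℝ) / m) atTop (𝓝 (1 / d)) := by
  have hfloor : Tendsto (fun m : ℕ ↦ (⌊(m / d : ℝ)⌋₊ : ℝ) / (m / d : ℝ) * (1 / d)) atTop
      (𝓝 (1 * (1 / d))) :=
    (tendsto_nat_floor_div_atTop.comp
      (tendsto_natCast_atTop_atTop.atTop_div_const (by positivity))).mul_const _
  rw [one_mul] at hfloor
  refine hfloor.congr fun m ↦ ?_
  rw [Nat.floor_div_natCast, Nat.floor_natCast]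
  field_simp

lemma tendsto_div_comp_nat_div {a b : ℕ → ℝ} {α β : ℝ} {d : ℕ} (hd : d ≠ 0)
    (ha : Tendsto (fun m : ℕ ↦ a m / m) atTop (𝓝 α))
    (hb : Tendsto (fun m : ℕ ↦ b m / m) atTop (𝓝 β)) (hβ : β ≠ 0) :
    Tendsto (fun m ↦ a (m / d) / b m) atTop (𝓝 (α / d / β)) := by
  have h := ((ha.comp (Nat.tendsto_div_const_atTop hd)).mul
    (tendsto_natCast_div_div_self hd)).div hb hβ
  rw [mul_one_div] at h
  refine h.congr' ?_
  filter_upwards [eventually_ge_atTop d] with m hm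
  have hmd : ((m / d : ℕ) : ℝ) ≠ 0 := by
    exact_mod_cast (Nat.div_pos hm (Nat.pos_of_ne_zero hd)).ne'
  have hm0 : (m : ℝ) ≠ 0 := by exact_mod_cast (hd.bot_lt.trans_le hm).ne'
  simp only [Pi.div_apply, Function.comp_apply]
  field_simp

theorem gaussian_walk_p_variation_ratio_two_steps_general
    {Ω : Type*} [MeasureSpace Ω]
    (ξ : ℕ → Ω → ℝ) (v : NNReal) (hv : 0 < v)
    (hmeas : ∀ i, Measurable (ξ i))
    (hindep : iIndepFun ξ ℙ)
    (hdist : ∀ i, Measure.map (ξ i) ℙ = gaussianReal 0 v)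
    (M : ℕ) (hM : 1 ≤ M) (p : ℝ) (hp : 0 < p) :
    ∀ᵐ ω ∂ℙ, Tendsto (fun n : ℕ =>
        (∑ k ∈ Finset.Icc 1 (n / (2 * M)),
            |(∑ i ∈ Finset.range (2 * k * M), ξ i ω) -
              ∑ i ∈ Finset.range ((2 * k - 2) * M), ξ i ω| ^ p) /
        (∑ k ∈ Finset.Icc 1 (n / M),
            |(∑ i ∈ Finset.range (k * M), ξ i ω) -
              ∑ i ∈ Finset.range ((k - 1) * M), ξ i ω| ^ p))
      atTop (nhds ((2 : ℝ) ^ (p / 2 - 1))) := by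
  have hM0 : M ≠ 0 := Nat.one_le_iff_ne_zero.mp hM
  have hMv : (M : ℝ≥0) * v ≠ 0 := mul_ne_zero (Nat.cast_ne_zero.2 hM0) hv.ne'
  have habs : Measurable fun x : ℝ ↦ |x| ^ p := measurable_abs.pow_const p
  have hmoment : ∫ x, |x| ^ p ∂gaussianReal 0 ((2 * M : ℕ) * v) =
      2 ^ (p / 2) * ∫ x, |x| ^ p ∂gaussianReal 0 (M * v) := by
    rw [Nat.cast_mul, Nat.cast_ofNat, mul_assoc, integral_abs_rpow_gaussianReal_mul]
    norm_num
  filter_upwards [strong_law_blockSum hmeas hindep hdist (2 * M) habs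
      (integrable_abs_rpow_gaussianReal _ _ hp.le),
    strong_law_blockSum hmeas hindep hdist M habs
      (integrable_abs_rpow_gaussianReal _ _ hp.le)] with ω hnum hden
  rw [hmoment] at hnum
  have hmoment_pos := (integral_abs_rpow_gaussianReal_pos 0 hMv hp.le).ne'
  have hlim := (tendsto_div_comp_nat_div two_ne_zero hnum hden hmoment_pos).comp
    (Nat.tendsto_div_const_atTop hM0)
  have hidx (k : ℕ) : 2 * k * M = k * (2 * M) ∧ (2 * k - 2) * M = (k - 1) * (2 * M) :=
    ⟨by ring, by rw [Nat.sub_mul, Nat.sub_mul]; ring_nf⟩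
  convert hlim using 2 with n
  · simp only [Function.comp_apply, Nat.div_div_eq_div_mul, hidx, mul_comm M 2]
    rw [sum_Icc_comp_increment_eq_sum_range_blockSum ξ (2 * M) _ (fun x ↦ |x| ^ p),
      sum_Icc_comp_increment_eq_sum_range_blockSum ξ M _ (fun x ↦ |x| ^ p)]
  · rw [Real.rpow_sub two_pos, Real.rpow_one, Nat.cast_ofNat]
    field_simp

/-- For a Gaussian random walk `S k = ξ 1 + … + ξ k` with `(ξ i)` i.i.d. centered
Gaussian of variance `v > 0`, an integer `M ≥ 1` and `p > 0`, almost surely the ratio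
of the `2M`-step `p`-variation to the `M`-step `p`-variation converges to `2^{p/2−1}`. -/
theorem gaussian_walk_p_variation_ratio_two_steps
    {Ω : Type*} [MeasureSpace Ω] [IsProbabilityMeasure (ℙ : Measure Ω)]
    (ξ : ℕ → Ω → ℝ) (v : NNReal) (hv : 0 < v)
    (hmeas : ∀ i, Measurable (ξ i))
    (hindep : iIndepFun ξ ℙ)
    (hdist : ∀ i, Measure.map (ξ i) ℙ = gaussianReal 0 v)
    (M : ℕ) (hM : 1 ≤ M) (p : ℝ) (hp : 0 < p) :
    ∀ᵐ ω ∂ℙ, Tendsto (fun n : ℕ =>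
        (∑ k ∈ Finset.Icc 1 (n / (2 * M)),
            |(∑ i ∈ Finset.range (2 * k * M), ξ i ω) -
              ∑ i ∈ Finset.range ((2 * k - 2) * M), ξ i ω| ^ p) /
        (∑ k ∈ Finset.Icc 1 (n / M),
            |(∑ i ∈ Finset.range (k * M), ξ i ω) -
              ∑ i ∈ Finset.range ((k - 1) * M), ξ i ω| ^ p))
      atTop (nhds ((2 : ℝ) ^ (p / 2 - 1))) :=
  gaussian_walk_p_variation_ratio_two_steps_general ξ v hv hmeas hindep hdist M hM p hp
end

section
/- Let (ξ_i)_{i≥1} be an i.i.d. sequence of centered real Gaussian random variables with variance v > 0, and for each n let Y^n(k/n) := n^{−1/2}(ξ_1+…+ξ_k) + J(k/n) for k = 0,…,n, where J is the jump part with jump sizes c_1,…,c_r and distinct jump times τ_1,…,τ_r ∈ (0,1). Then almost surely lim_{n→∞} ∑_{k=1}^{n} (Y^n(k/n) − Y^n((k−1)/n))² = v + ∑_{m=1}^{r} c_m², i.e. the 2-variation converges to the integrated squared diffusion coefficient plus the sum of squared jumps. -/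
/-!
Over the step `[(k-1)/n, k/n]` the observed process moves by `n^{-1/2} ξ_k`, plus `c_m` if
`⌈n τ_m⌉ = k`; for large `n` distinct jump times fall into distinct steps. Expanding the square,
the Gaussian part is `(1/n) ∑_{k<n} ξ_k²`, which tends to `v` almost surely by the strong law of
large numbers, the jump part is exactly `∑ c_m²`, and each cross term `n^{-1/2} ξ_{⌈n τ_m⌉}`
vanishes in the limit because convergence of the Cesàro means of `ξ_k²` forces `ξ_k² / k → 0`.
-/

open Finset Filter MeasureTheory ProbabilityTheory Topology

lemma integral_sq_gaussianReal_zero (v : NNReal) :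
    ∫ x, x ^ 2 ∂gaussianReal 0 v = v := by
  rw [← variance_of_integral_eq_zero aemeasurable_id' integral_id_gaussianReal]
  exact variance_fun_id_gaussianReal

lemma integrable_sq_gaussianReal (μ : ℝ) (v : NNReal) :
    Integrable (fun x => x ^ 2) (gaussianReal μ v) :=
  (memLp_id_gaussianReal 2).integrable_sq

theorem ae_tendsto_average_comp_of_iIndepFun {Ω E : Type*} [MeasurableSpace Ω]
    [MeasurableSpace E] {P : Measure Ω} {μ : Measure E} [NeZero μ] {ξ : ℕ → Ω → E}
    (hindep : iIndepFun ξ P) (hdist : ∀ i, P.map (ξ i) = μ) {f : E → ℝ} (hf : Measurable f)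
    (hfμ : Integrable f μ) :
    ∀ᵐ ω ∂P, Tendsto (fun n : ℕ => (∑ i ∈ range n, f (ξ i ω)) / n) atTop
      (𝓝 (∫ x, f x ∂μ)) := by
  have hξ (i : ℕ) : AEMeasurable (ξ i) P :=
    .of_map_ne_zero (by rw [hdist i]; exact NeZero.ne μ)
  have hident (i : ℕ) : IdentDistrib (f ∘ ξ i) (f ∘ ξ 0) P P :=
    (IdentDistrib.mk (hξ i) (hξ 0) (by rw [hdist, hdist])).comp hf
  have hint : Integrable (f ∘ ξ 0) P :=
    (integrable_map_measure hf.aestronglyMeasurable (hξ 0)).mp (hdist 0 ▸ hfμ)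
  have hmean : ∫ ω, f (ξ 0 ω) ∂P = ∫ x, f x ∂μ := by
    rw [← hdist 0, integral_map (hξ 0) hf.aestronglyMeasurable]
  simpa [hmean] using strong_law_ae_real (fun i => f ∘ ξ i) hint
    (fun i j hij => (hindep.indepFun hij).comp hf hf) hident

lemma sum_Icc_one_comp_pred {M : Type*} [AddCommMonoid M] (f : ℕ → M) (n : ℕ) :
    ∑ k ∈ Icc 1 n, f (k - 1) = ∑ i ∈ range n, f i := by
  induction n with
  | zero => simp
  | succ n ih => rw [sum_Icc_succ_top (by omega), ih, sum_range_succ, Nat.add_sub_cancel]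

lemma ite_le_div_sub_ite_le_pred_div {t : ℝ} (ht : 0 < t) (x : ℝ) (n : ℕ) {k : ℕ} (hk : 1 ≤ k) :
    ((if t ≤ (k : ℝ) / n then x else 0) - if t ≤ ((k - 1 : ℕ) : ℝ) / n then x else 0) =
      if ⌈n * t⌉₊ = k then x else 0 := by
  rcases Nat.eq_zero_or_pos n with rfl | hn
  · simp [ht.not_ge]
    omega
  have hle (j : ℕ) : t ≤ (j : ℝ) / n ↔ ⌈n * t⌉₊ ≤ j := by
    rw [Nat.ceil_le, le_div_iff₀ (by positivity), mul_comm]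
  have hpos : 0 < ⌈n * t⌉₊ := Nat.ceil_pos.mpr (by positivity)
  simp only [hle]
  split_ifs <;> first | ring1 | omega

section Jumps

variable {ι α R : Type*} [Fintype ι] [DecidableEq α] [CommSemiring R]

lemma sum_mul_sum_ite_eq (S : Finset α) (κ : ι → α) (hκ : ∀ i, κ i ∈ S) (f : α → R)
    (c : ι → R) :
    ∑ k ∈ S, f k * ∑ i, (if κ i = k then c i else 0) = ∑ i, f (κ i) * c i := by
  simp_rw [mul_sum, mul_ite, mul_zero]
  rw [sum_comm]
  simp [hκ]

lemma sum_ite_eq_of_injective {κ : ι → α} (hκ : Function.Injective κ) (c : ι → R) (i : ι) :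
    ∑ j, (if κ j = κ i then c j else 0) = c i := by
  classical
  simp [hκ.eq_iff]

lemma sum_sq_sum_ite_eq (S : Finset α) {κ : ι → α} (hκ : Function.Injective κ)
    (hκS : ∀ i, κ i ∈ S) (c : ι → R) :
    ∑ k ∈ S, (∑ i, if κ i = k then c i else 0) ^ 2 = ∑ i, c i ^ 2 := by
  simp_rw [sq, sum_mul_sum_ite_eq S κ hκS, sum_ite_eq_of_injective hκ]

end Jumps

lemma rpow_neg_half_sq (x : ℝ) (hx : 0 ≤ x) : (x ^ (-(1 : ℝ) / 2)) ^ 2 = x⁻¹ := by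
  rw [← Real.rpow_natCast, ← Real.rpow_mul hx]
  norm_num [Real.rpow_neg_one]

lemma tendsto_div_succ_of_tendsto_average {a : ℕ → ℝ} {v : ℝ}
    (ha : Tendsto (fun n : ℕ => (∑ i ∈ range n, a i) / n) atTop (𝓝 v)) :
    Tendsto (fun n : ℕ => a n / (n + 1)) atTop (𝓝 0) := by
  set A : ℕ → ℝ := fun n => (∑ i ∈ range n, a i) / n
  have hA (n : ℕ) : a n / (n + 1) = A (n + 1) - n / (n + 1) * A n := by
    rcases Nat.eq_zero_or_pos n with rfl | hn
    · simp [A]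
    · simp only [A, sum_range_succ, Nat.cast_add, Nat.cast_one]
      field_simp
      ring
  have hfrac : Tendsto (fun n : ℕ => (n : ℝ) / (n + 1)) atTop (𝓝 1) :=
    tendsto_natCast_div_add_atTop 1
  simpa [hA] using ((tendsto_add_atTop_iff_nat 1).2 ha).sub (hfrac.mul ha)

lemma tendsto_rpow_neg_half_mul_comp_of_tendsto_average {g : ℕ → ℝ} {v : ℝ}
    (hg : Tendsto (fun n : ℕ => (∑ i ∈ range n, g i ^ 2) / n) atTop (𝓝 v))
    {κ : ℕ → ℕ} (hκ : Tendsto κ atTop atTop) (hκn : ∀ᶠ n in atTop, κ n < n) :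
    Tendsto (fun n : ℕ => (n : ℝ) ^ (-(1 : ℝ) / 2) * g (κ n)) atTop (𝓝 0) := by
  have hsq : Tendsto (fun n : ℕ => ((n : ℝ) ^ (-(1 : ℝ) / 2) * g (κ n)) ^ 2) atTop (𝓝 0) := by
    refine squeeze_zero' (.of_forall fun n => sq_nonneg _) ?_
      ((tendsto_div_succ_of_tendsto_average hg).comp hκ)
    filter_upwards [hκn] with n hn
    rw [mul_pow, rpow_neg_half_sq _ n.cast_nonneg, inv_mul_eq_div, Function.comp_apply]
    exact div_le_div_of_nonneg_left (sq_nonneg _) (by positivity) (by exact_mod_cast hn)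
  have habs := hsq.sqrt
  simp only [Real.sqrt_sq_eq_abs, Real.sqrt_zero] at habs
  exact (tendsto_zero_iff_abs_tendsto_zero _).2 habs

lemma tendsto_natCeil_mul_atTop {t : ℝ} (ht : 0 < t) :
    Tendsto (fun n : ℕ => ⌈n * t⌉₊) atTop atTop :=
  tendsto_nat_ceil_atTop.comp (tendsto_natCast_atTop_atTop.atTop_mul_const ht)

lemma natCeil_mul_mem_Icc {t : ℝ} (ht : t ∈ Set.Ioc 0 1) {n : ℕ} (hn : 0 < n) :
    ⌈n * t⌉₊ ∈ Icc 1 n :=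
  mem_Icc.2 ⟨Nat.one_le_iff_ne_zero.2 (Nat.ceil_pos.2 (by have := ht.1; positivity)).ne',
    Nat.ceil_le.2 (mul_le_of_le_one_right n.cast_nonneg ht.2)⟩

lemma eventually_injective_natCeil_mul {ι : Type*} [Finite ι] {τ : ι → ℝ}
    (hτ : Function.Injective τ) (hτ0 : ∀ i, 0 ≤ τ i) :
    ∀ᶠ n : ℕ in atTop, Function.Injective fun i => ⌈n * τ i⌉₊ := by
  have hlt (i j : ι) : ∀ᶠ n : ℕ in atTop, τ i < τ j → ⌈n * τ i⌉₊ < ⌈n * τ j⌉₊ := by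
    by_cases h : τ i < τ j
    · have hgap := tendsto_natCast_atTop_atTop.atTop_mul_const (sub_pos.2 h)
      filter_upwards [hgap.eventually_ge_atTop 1] with n hn _
      refine Nat.cast_lt.1 ((Nat.ceil_lt_add_one (by have := hτ0 i; positivity)).trans_le ?_)
      linarith [Nat.le_ceil ((n : ℝ) * τ j)]
    · exact .of_forall fun _ h' => absurd h' h
  filter_upwards [eventually_all.2 fun i => eventually_all.2 (hlt i)] with n hn i j hij
  by_contra hne
  rcases (hτ.ne hne).lt_or_gt with h | h
  · exact (hn i j h).ne hij
  · exact (hn j i h).ne' hij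

lemma walk_add_jumps_sub_pred {ι : Type*} [Fintype ι] (s : ℝ) (x : ℕ → ℝ) {c τ : ι → ℝ}
    (hτ : ∀ i, 0 < τ i) (n : ℕ) {k : ℕ} (hk : 1 ≤ k) :
    (s * ∑ j ∈ range k, x j + ∑ i, if τ i ≤ (k : ℝ) / n then c i else 0) -
        (s * ∑ j ∈ range (k - 1), x j +
          ∑ i, if τ i ≤ ((k - 1 : ℕ) : ℝ) / n then c i else 0) =
      s * x (k - 1) + ∑ i, if ⌈n * τ i⌉₊ = k then c i else 0 := by
  have hwalk : ∑ j ∈ range k, x j = ∑ j ∈ range (k - 1), x j + x (k - 1) := by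
    rw [← sum_range_succ, Nat.sub_add_cancel hk]
  have hjumps := sum_congr rfl fun i (_ : i ∈ univ) =>
    ite_le_div_sub_ite_le_pred_div (hτ i) (c i) n hk
  rw [sum_sub_distrib] at hjumps
  rw [hwalk, ← hjumps]
  ring

lemma sum_Icc_sq_add_sum_ite_eq {ι : Type*} [Fintype ι] (s : ℝ) (g : ℕ → ℝ) {n : ℕ}
    {κ : ι → ℕ} (hκ : Function.Injective κ) (hκn : ∀ i, κ i ∈ Icc 1 n) (c : ι → ℝ) :
    ∑ k ∈ Icc 1 n, (s * g (k - 1) + ∑ i, if κ i = k then c i else 0) ^ 2 =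
      s ^ 2 * ∑ i ∈ range n, g i ^ 2 + ∑ i, 2 * (s * g (κ i - 1)) * c i + ∑ i, c i ^ 2 := by
  simp_rw [add_sq, sum_add_distrib]
  rw [sum_mul_sum_ite_eq _ κ hκn, sum_sq_sum_ite_eq _ hκ hκn]
  simp_rw [mul_pow, ← mul_sum, sum_Icc_one_comp_pred (fun i => g i ^ 2)]

theorem tendsto_sum_sq_add_jumps {g : ℕ → ℝ} {v : ℝ}
    (hg : Tendsto (fun n : ℕ => (∑ i ∈ range n, g i ^ 2) / n) atTop (𝓝 v))
    {ι : Type*} [Fintype ι] (c τ : ι → ℝ) (hτ : Function.Injective τ)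
    (hτmem : ∀ i, τ i ∈ Set.Ioc 0 1) :
    Tendsto (fun n : ℕ => ∑ k ∈ Icc 1 n, ((n : ℝ) ^ (-(1 : ℝ) / 2) * g (k - 1) +
        ∑ i, if ⌈n * τ i⌉₊ = k then c i else 0) ^ 2) atTop (𝓝 (v + ∑ i, c i ^ 2)) := by
  have hcross (i : ι) : Tendsto (fun n : ℕ => (n : ℝ) ^ (-(1 : ℝ) / 2) * g (⌈n * τ i⌉₊ - 1))
      atTop (𝓝 0) := by
    refine tendsto_rpow_neg_half_mul_comp_of_tendsto_average hg
      ((tendsto_sub_atTop_nat 1).comp (tendsto_natCeil_mul_atTop (hτmem i).1)) ?_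
    filter_upwards [eventually_gt_atTop 0] with n hn
    have := mem_Icc.1 (natCeil_mul_mem_Icc (hτmem i) hn)
    omega
  have hwalk : Tendsto (fun n : ℕ => ((n : ℝ) ^ (-(1 : ℝ) / 2)) ^ 2 * ∑ i ∈ range n, g i ^ 2)
      atTop (𝓝 v) :=
    hg.congr fun n => by rw [rpow_neg_half_sq _ n.cast_nonneg, inv_mul_eq_div]
  have hlim := (hwalk.add (tendsto_finsetSum univ fun i _ => ((hcross i).const_mul 2).mul_const
    (c i))).add_const (∑ i, c i ^ 2)
  simp only [mul_zero, zero_mul, sum_const_zero, add_zero] at hlim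
  refine hlim.congr' ?_
  filter_upwards [eventually_gt_atTop 0,
    eventually_injective_natCeil_mul hτ fun i => (hτmem i).1.le] with n hn hinj
  exact (sum_Icc_sq_add_sum_ite_eq _ g hinj (fun i => natCeil_mul_mem_Icc (hτmem i) hn) c).symm

theorem rescaled_walk_plus_jumps_quadratic_variation_general
    {Ω : Type*} [MeasureSpace Ω]
    (ξ : ℕ → Ω → ℝ) (v : NNReal)
    (hindep : iIndepFun ξ ℙ)
    (hdist : ∀ i, Measure.map (ξ i) ℙ = gaussianReal 0 v)
    (r : ℕ) (c τ : Fin r → ℝ) (hτinj : Function.Injective τ)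
    (hτmem : ∀ m, τ m ∈ Set.Ioo (0 : ℝ) 1)
    (Y : ℕ → ℕ → Ω → ℝ)
    (hY : ∀ n k ω, Y n k ω =
      (n : ℝ) ^ (-(1 : ℝ) / 2) * (∑ i ∈ Finset.range k, ξ i ω) +
        ∑ m, if τ m ≤ (k : ℝ) / n then c m else 0) :
    ∀ᵐ ω ∂ℙ, Tendsto (fun n : ℕ =>
        ∑ k ∈ Finset.Icc 1 n, (Y n k ω - Y n (k - 1) ω) ^ 2)
      atTop (nhds ((v : ℝ) + ∑ m, (c m) ^ 2)) := by
  have hsq : Measurable fun x : ℝ => x ^ 2 := by fun_prop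
  filter_upwards [ae_tendsto_average_comp_of_iIndepFun hindep hdist hsq
    (integrable_sq_gaussianReal 0 v)] with ω hω
  rw [integral_sq_gaussianReal_zero] at hω
  refine (tendsto_sum_sq_add_jumps hω c τ hτinj fun m => Set.Ioo_subset_Ioc_self (hτmem m)).congr
    fun n => sum_congr rfl fun k hk => ?_
  rw [hY, hY, walk_add_jumps_sub_pred _ _ (fun m => (hτmem m).1) n (mem_Icc.1 hk).1]

/-- Let `(ξ i)` be i.i.d. centered Gaussians with variance `v > 0`, and for each `n`
let `Y n k = n^{-1/2}(ξ 1 + … + ξ k) + J(k/n)` where `J = ∑_m c_m · 1_{[τ_m,∞)}`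
has distinct jump times `τ_m ∈ (0,1)`. Then almost surely
`∑_{k=1}^n (Y n k − Y n (k−1))² → v + ∑_m c_m²` as `n → ∞`: the 2-variation
converges to the integrated squared diffusion coefficient plus the sum of squared
jumps. -/
theorem rescaled_walk_plus_jumps_quadratic_variation
    {Ω : Type*} [MeasureSpace Ω] [IsProbabilityMeasure (ℙ : Measure Ω)]
    (ξ : ℕ → Ω → ℝ) (v : NNReal) (hv : 0 < v)
    (hmeas : ∀ i, Measurable (ξ i))
    (hindep : iIndepFun ξ ℙ)
    (hdist : ∀ i, Measure.map (ξ i) ℙ = gaussianReal 0 v)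
    (r : ℕ) (c τ : Fin r → ℝ) (hτinj : Function.Injective τ)
    (hτmem : ∀ m, τ m ∈ Set.Ioo (0 : ℝ) 1)
    (Y : ℕ → ℕ → Ω → ℝ)
    (hY : ∀ n k ω, Y n k ω =
      (n : ℝ) ^ (-(1 : ℝ) / 2) * (∑ i ∈ Finset.range k, ξ i ω) +
        ∑ m, if τ m ≤ (k : ℝ) / n then c m else 0) :
    ∀ᵐ ω ∂ℙ, Tendsto (fun n : ℕ =>
        ∑ k ∈ Finset.Icc 1 n, (Y n k ω - Y n (k - 1) ω) ^ 2)
      atTop (nhds ((v : ℝ) + ∑ m, (c m) ^ 2)) :=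
  rescaled_walk_plus_jumps_quadratic_variation_general ξ v hindep hdist r c τ hτinj hτmem Y hY
end
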